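/- arXiv:1402.2903 — 2 statements merged into one kernel-verified Lean document; each statement's English description precedes it below -/
import Mathlib

section
/- If a unicyclic non-bipartite graph G has a perfect matching, then G is a König-Egerváry graph, i.e., α(G) + μ(G) = |V(G)|. -/
open SimpleGraph

attribute [local instance] Classical.propDecidable

variable {V : Type*}

/-- A set of vertices is independent if no two of its members are adjacent. -/
def IsIndepSet (G : SimpleGraph V) (s : Set V) : Prop :=
  ∀ ⦃a⦄, a ∈ s → ∀ ⦃b⦄, b ∈ s → ¬ G.Adj a b

/-- The independence number α(G). -/
noncomputable def indepNum (G : SimpleGraph V) [Fintype V] : ℕ :=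
  sSup {n | ∃ s : Finset V, _root_.IsIndepSet G ↑s ∧ s.card = n}

/-- The matching number μ(G). -/
noncomputable def matchNum (G : SimpleGraph V) [Fintype V] : ℕ :=
  sSup {n | ∃ M : G.Subgraph, M.IsMatching ∧ M.edgeSet.ncard = n}

/-- A König-Egerváry graph: α(G) + μ(G) = |V(G)|. -/
def KonigEgervary (G : SimpleGraph V) [Fintype V] : Prop :=
  _root_.indepNum G + matchNum G = Fintype.card V

/-- A maximum independent set. -/
def IsMaxIndepSet (G : SimpleGraph V) [Fintype V] (s : Finset V) : Prop :=
  _root_.IsIndepSet G ↑s ∧ s.card = _root_.indepNum G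

/-- A maximum matching. -/
def IsMaximumMatching (G : SimpleGraph V) [Fintype V] (M : G.Subgraph) : Prop :=
  M.IsMatching ∧ M.edgeSet.ncard = matchNum G

/-- A leaf: a vertex with exactly one neighbour. -/
def IsLeaf (G : SimpleGraph V) (v : V) : Prop := ∃! u, G.Adj v u

/-- A cycle `p` is `M`-alternating if of every two distinct incident edges of
the cycle exactly one belongs to `M`. -/
def IsAlternatingCycle (G : SimpleGraph V) (M : Set (Sym2 V)) {v : V} (p : G.Walk v v) : Prop :=
  p.IsCycle ∧ ∀ e f : Sym2 V, e ∈ p.edges → f ∈ p.edges → e ≠ f →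
    (∃ x, x ∈ e ∧ x ∈ f) → (e ∈ M ↔ f ∉ M)

/-- `G` contains an `M`-alternating cycle. -/
def HasAlternatingCycle (G : SimpleGraph V) (M : Set (Sym2 V)) : Prop :=
  ∃ (v : V) (p : G.Walk v v), IsAlternatingCycle G M p

/-- `G` is unicyclic: it has exactly one cycle (up to its edge set). -/
def UniqueCycle (G : SimpleGraph V) : Prop :=
  ∃! c : Set (Sym2 V), ∃ (v : V) (p : G.Walk v v), p.IsCycle ∧ c = {e | e ∈ p.edges}

/-- The core of `G`: the intersection of all maximum independent sets. -/
def core (G : SimpleGraph V) [Fintype V] : Set V :=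
  {v | ∀ s : Finset V, IsMaxIndepSet G s → v ∈ s}

/-!
Some edge `e` of the cycle lies outside the perfect matching `M`, and `G - e` is a forest,
hence `2`-colourable. Each colour class spans no edge of `M`, so it is disjoint from its image
under the matching involution and has at most `n / 2` vertices; as the two classes cover `V`,
both have exactly `n / 2`. The class missing a chosen endpoint of `e` is then independent in `G`.
Since `M` also bounds every independent set of `G` by `n / 2`, `α(G) = μ(G) = n / 2`.
-/

namespace SimpleGraph

variable {G H : SimpleGraph V} {M : G.Subgraph}

theorem Subgraph.IsMatching.ncard_verts [Finite V] (hM : M.IsMatching) :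
    M.verts.ncard = 2 * M.edgeSet.ncard := by
  classical
  have : Fintype M.verts := Fintype.ofFinite _
  rw [isMatching_iff_forall_degree] at hM
  rw [← M.image_coe_edgeSet_coe,
    Set.ncard_image_of_injective _ (Sym2.map.injective Subtype.val_injective),
    ← coe_edgeFinset, Set.ncard_coe_finset, ← M.coe.sum_degrees_eq_twice_card_edges]
  simp [hM, Finset.card_univ]

theorem Subgraph.IsMatching.two_mul_ncard_edgeSet_le [Fintype V] (hM : M.IsMatching) :
    2 * M.edgeSet.ncard ≤ Fintype.card V := by
  rw [← hM.ncard_verts, ← Nat.card_eq_fintype_card, ← Set.ncard_univ]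
  exact Set.ncard_le_ncard (Set.subset_univ _)

theorem Subgraph.IsPerfectMatching.two_mul_ncard_edgeSet [Fintype V]
    (hM : M.IsPerfectMatching) : 2 * M.edgeSet.ncard = Fintype.card V := by
  rw [← hM.1.ncard_verts, hM.2.verts_eq_univ, Set.ncard_univ, Nat.card_eq_fintype_card]

theorem Subgraph.IsPerfectMatching.two_mul_card_le [Fintype V] (hM : M.IsPerfectMatching)
    {S : Finset V} (hS : ∀ a ∈ S, ∀ b ∈ S, ¬ M.Adj a b) : 2 * S.card ≤ Fintype.card V := by
  classical
  choose partner hpartner using Subgraph.isPerfectMatching_iff.mp hM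
  have hinj : Function.Injective partner := fun a b hab =>
    hM.1.eq_of_adj_right (hpartner a).1 (hab ▸ (hpartner b).1)
  have hdisj : Disjoint S (S.image partner) := by
    rw [Finset.disjoint_left]
    rintro _ ha hb
    obtain ⟨a', ha', rfl⟩ := Finset.mem_image.mp hb
    exact hS a' ha' _ ha (hpartner a').1
  calc 2 * S.card = (S ∪ S.image partner).card := by
        rw [Finset.card_union_of_disjoint hdisj, Finset.card_image_of_injective _ hinj, two_mul]
    _ ≤ Fintype.card V := Finset.card_le_univ _

theorem Coloring.two_mul_card_colorClass_eq [Fintype V] (c : H.Coloring (Fin 2))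
    (hM : M.IsPerfectMatching) (hMH : M.spanningCoe ≤ H) (i : Fin 2) :
    2 * (Finset.univ.filter (c · = i)).card = Fintype.card V := by
  have hle : ∀ j, 2 * (Finset.univ.filter (c · = j)).card ≤ Fintype.card V := fun j =>
    hM.two_mul_card_le fun a ha b hb hab =>
      c.valid (hMH hab) ((Finset.mem_filter.1 ha).2.trans (Finset.mem_filter.1 hb).2.symm)
  have hsum := Finset.card_eq_sum_card_fiberwise (s := Finset.univ) (t := Finset.univ) (f := c)
    fun _ _ => Finset.mem_univ _
  rw [Fin.sum_univ_two, Finset.card_univ] at hsum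
  have := hle 0
  have := hle 1
  obtain rfl | rfl : i = 0 ∨ i = 1 := by omega
  all_goals omega

theorem Walk.IsCycle.exists_mem_edges_notMem_edgeSet {v : V} {p : G.Walk v v}
    (hp : p.IsCycle) (hM : M.IsMatching) : ∃ e ∈ p.edges, e ∉ M.edgeSet := by
  by_contra! h
  have hfirst := h _ (p.mk_start_snd_mem_edges hp.not_nil)
  have hlast := h _ (p.mk_penultimate_end_mem_edges hp.not_nil)
  rw [Subgraph.mem_edgeSet] at hfirst hlast
  exact hp.snd_ne_penultimate (hM.eq_of_adj_left hfirst hlast.symm)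

end SimpleGraph

section

variable {G : SimpleGraph V} {M : G.Subgraph} [Fintype V]

theorem matchNum_eq_ncard_edgeSet (hM : M.IsPerfectMatching) :
    matchNum G = M.edgeSet.ncard := by
  refine IsGreatest.csSup_eq ⟨⟨M, hM.1, rfl⟩, ?_⟩
  rintro _ ⟨N, hN, rfl⟩
  have := hN.two_mul_ncard_edgeSet_le
  have := hM.two_mul_ncard_edgeSet
  omega

theorem indepNum_eq_of_two_mul_card_eq (hM : M.IsPerfectMatching) {S : Finset V}
    (hS : _root_.IsIndepSet G ↑S) (hcard : 2 * S.card = Fintype.card V) :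
    _root_.indepNum G = S.card := by
  refine IsGreatest.csSup_eq ⟨⟨S, hS, rfl⟩, ?_⟩
  rintro _ ⟨T, hT, rfl⟩
  have := hM.two_mul_card_le fun a ha b hb hab => hT ha hb (M.adj_sub hab)
  omega

theorem exists_isIndepSet_two_mul_card_eq (hM : M.IsPerfectMatching) {e : Sym2 V}
    (he : e ∉ M.edgeSet) (hbip : (G.deleteEdges {e}).Colorable 2) :
    ∃ S : Finset V, _root_.IsIndepSet G ↑S ∧ 2 * S.card = Fintype.card V := by
  obtain ⟨c⟩ := hbip
  obtain ⟨x, hx⟩ : ∃ x, x ∈ e := ⟨_, e.out_fst_mem⟩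
  obtain ⟨i, hi⟩ := exists_ne (c x)
  have hMH : M.spanningCoe ≤ G.deleteEdges {e} := fun a b hab =>
    (deleteEdges_adj ..).2 ⟨M.adj_sub hab, fun h => he (Set.mem_singleton_iff.1 h ▸ hab)⟩
  refine ⟨Finset.univ.filter (c · = i), ?_, c.two_mul_card_colorClass_eq hM hMH i⟩
  intro a ha b hb hab
  simp only [Finset.coe_filter, Finset.mem_univ, true_and, Set.mem_ofPred_eq] at ha hb
  by_cases h : s(a, b) = e
  · subst h
    rcases Sym2.mem_iff.1 hx with rfl | rfl
    exacts [hi ha.symm, hi hb.symm]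
  · exact c.valid ((deleteEdges_adj ..).2 ⟨hab, h⟩) (ha.trans hb.symm)

end

theorem UniqueCycle.isAcyclic_deleteEdges {G : SimpleGraph V} (h : UniqueCycle G) {v : V}
    {p : G.Walk v v} (hp : p.IsCycle) {e : Sym2 V} (he : e ∈ p.edges) :
    (G.deleteEdges {e}).IsAcyclic := by
  intro u q hq
  obtain ⟨c, -, hc⟩ := h
  have hle := G.deleteEdges_le {e}
  have hedges : {f | f ∈ q.edges} = {f | f ∈ p.edges} := by
    rw [← q.edges_mapLe_eq_edges hle]
    exact (hc _ ⟨u, _, hq.mapLe hle, rfl⟩).trans (hc _ ⟨v, p, hp, rfl⟩).symm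
  have := q.edges_subset_edgeSet ((Set.ext_iff.1 hedges e).2 he)
  rw [edgeSet_deleteEdges] at this
  exact this.2 rfl

theorem stmt11_general (G : SimpleGraph V) [Fintype V] (huni : UniqueCycle G)
    (hpm : ∃ M : G.Subgraph, M.IsPerfectMatching) :
    KonigEgervary G := by
  obtain ⟨M, hM⟩ := hpm
  obtain ⟨-, v, p, hp, -⟩ := huni.exists
  obtain ⟨e, he, heM⟩ := hp.exists_mem_edges_notMem_edgeSet hM.1
  obtain ⟨S, hS, hcard⟩ := exists_isIndepSet_two_mul_card_eq hM heM
    (huni.isAcyclic_deleteEdges hp he).colorable_two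
  have := hM.two_mul_ncard_edgeSet
  rw [KonigEgervary, indepNum_eq_of_two_mul_card_eq hM hS hcard, matchNum_eq_ncard_edgeSet hM]
  omega

theorem stmt11 (G : SimpleGraph V) [Fintype V] (huni : UniqueCycle G)
    (hodd : ∃ (v : V) (p : G.Walk v v), p.IsCycle ∧ Odd p.length)
    (hpm : ∃ M : G.Subgraph, M.IsPerfectMatching) :
    KonigEgervary G :=
  stmt11_general G huni hpm
end

section
/- Every nonempty forest with a perfect matching has a leaf a whose pendant edge belongs to the (unique) perfect matching, and removing a together with its neighbor yields a forest with a perfect matching. -/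
open SimpleGraph

attribute [local instance] Classical.propDecidable

variable {V : Type*}

/-
A longest path in a finite forest with an edge starts at a leaf: a neighbour of its start off the
path would extend it, and a neighbour on the path must be its second vertex, since otherwise the
forest would contain a cycle. The pendant edge of a leaf `a` lies in every perfect matching `M`,
because `a` must be matched to its only neighbour `b`. Deleting `a` and `b` keeps the graph
acyclic, and since `M` pairs `a` with `b`, the remaining edges of `M` form a perfect matching of
what is left.
-/

namespace SimpleGraph

variable {G : SimpleGraph V}

theorem IsAcyclic.exists_forall_adj_iff_eq [Finite V] (hG : G.IsAcyclic) {x y : V}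
    (hxy : G.Adj x y) : ∃ a b, ∀ u, G.Adj a u ↔ u = b := by
  have : Nonempty V := ⟨x⟩
  obtain ⟨a, c, p, hp, hmax⟩ := Walk.exists_isPath_forall_isPath_length_le_length G
  have hnil : ¬p.Nil := by
    intro hpnil
    have := hmax x y (Walk.cons hxy .nil) (Path.singleton hxy).2
    simp [Walk.length_eq_zero_iff.mpr hpnil] at this
  refine ⟨a, p.snd, fun w => ⟨fun haw => hG.eq_snd_of_adj_start hp haw ?_, ?_⟩⟩
  · by_contra hw
    have := hmax w c (p.cons haw.symm) (hp.cons hw)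
    simp at this
  · rintro rfl
    exact p.adj_snd hnil

namespace Subgraph

variable {M : G.Subgraph}

theorem IsPerfectMatching.adj_of_forall_adj_iff_eq (hM : M.IsPerfectMatching) {a b : V}
    (hab : ∀ u, G.Adj a u ↔ u = b) : M.Adj a b := by
  obtain ⟨w, haw, -⟩ := isPerfectMatching_iff.mp hM a
  rwa [(hab w).mp (M.adj_sub haw)] at haw

theorem IsPerfectMatching.comap_induce (hM : M.IsPerfectMatching) {s : Set V}
    (hs : ∀ ⦃x y⦄, M.Adj x y → x ∈ s → y ∈ s) :
    (M.comap (Embedding.induce s).toHom).IsPerfectMatching := by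
  refine isPerfectMatching_iff.mpr fun ⟨x, hx⟩ => ?_
  obtain ⟨y, hxy, huniq⟩ := isPerfectMatching_iff.mp hM x
  refine ⟨⟨y, hs hxy hx⟩, ⟨M.adj_sub hxy, hxy⟩, ?_⟩
  rintro z ⟨-, hxz⟩
  exact Subtype.ext (huniq z hxz)

theorem IsPerfectMatching.comap_induce_compl_pair (hM : M.IsPerfectMatching) {a b : V}
    (hab : M.Adj a b) :
    (M.comap (Embedding.induce ({a, b}ᶜ : Set V)).toHom).IsPerfectMatching := by
  refine hM.comap_induce fun x y hxy hx hy => hx ?_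
  rcases hy with rfl | rfl
  · exact .inr (hM.1.eq_of_adj_left hxy.symm hab)
  · exact .inl (hM.1.eq_of_adj_right hxy hab)

end Subgraph

end SimpleGraph

theorem stmt15 (G : SimpleGraph V) [Fintype V] [Nonempty V] (hforest : G.IsAcyclic)
    (M : G.Subgraph) (hM : M.IsPerfectMatching) :
    ∃ a b, (∀ u, G.Adj a u ↔ u = b) ∧ M.Adj a b ∧
      (G.induce ({a, b}ᶜ : Set V)).IsAcyclic ∧
      ∃ M' : (G.induce ({a, b}ᶜ : Set V)).Subgraph, M'.IsPerfectMatching := by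
  obtain ⟨v⟩ := ‹Nonempty V›
  obtain ⟨w, hvw, -⟩ := Subgraph.isPerfectMatching_iff.mp hM v
  obtain ⟨a, b, hab⟩ := hforest.exists_forall_adj_iff_eq (M.adj_sub hvw)
  have hMab : M.Adj a b := hM.adj_of_forall_adj_iff_eq hab
  exact ⟨a, b, hab, hMab, hforest.induce _, _, hM.comap_induce_compl_pair hMab⟩
end
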